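/- Let 0 < τ < 1 and let F'(s) = (z₊+z₋)²/(2(1+s)²) − (z₊−z₋)²/(2(1−s)²) − 1/s for z₊, z₋ ∈ ℂ. Then: (iii) if z₊ ∈ {−√2, √2} and z₋ ∉ {−√2, √2}, and s₋ is a complex number with s₋² = z₋² − 2, then the set {s ∈ ℂ∖{0,1,−1} : F'(s) = 0} equals {z₊(z₋+s₋)/2, z₊(z₋−s₋)/2}, and each of these two points is a zero of F' of order exactly two (i.e. F' = F'' = 0 and F''' ≠ 0 there); (iv) if z₊ = ε·z₋ with ε ∈ {1,−1} and both z₊, z₋ ∈ {−√2, √2}, then one of the two singular factors of F' has vanishing numerator, F' extends holomorphically to the point s* = z₊z₋/2 ∈ {1, −1}, and s* is the unique zero of F' in its (extended) domain ℂ∖{0, −s*}, of order exactly two. -/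

import Mathlib

/-!
Clearing denominators,
`s (1 + s)² (1 - s)² F'(s) = s² (z₊² - 2) (z₋² - 2) - (s² - z₊ z₋ s + 1)²`.
If `z₊² = 2` the first term drops out, so the saddle points are the roots `z₊ (z₋ ± s₋) / 2` of
the quadratic `s² - z₊ z₋ s + 1`; these are simple when `z₋² ≠ 2`, hence zeros of `F'` of order
exactly two. If moreover `z₊ = ε z₋` with `z₋² = 2`, one singular term of `F'` vanishes identically and
`F'(s) = 4 ε / (s + ε)² - 1 / s = -(s - ε)² / (s (s + ε)²)`.
-/

open scoped BigOperators Real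
open ComplexConjugate

/-- The derivative `F'` of the phase function. -/
noncomputable def Fd1 (zp zm s : ℂ) : ℂ :=
  (zp + zm) ^ 2 / (2 * (1 + s) ^ 2) - (zp - zm) ^ 2 / (2 * (1 - s) ^ 2) - 1 / s

/-- The second derivative `F''` of the phase function. -/
noncomputable def Fd2 (zp zm s : ℂ) : ℂ :=
  -(zp + zm) ^ 2 / (1 + s) ^ 3 - (zp - zm) ^ 2 / (1 - s) ^ 3 + 1 / s ^ 2

/-- The third derivative `F'''` of the phase function. -/
noncomputable def Fd3 (zp zm s : ℂ) : ℂ :=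
  3 * (zp + zm) ^ 2 / (1 + s) ^ 4 - 3 * (zp - zm) ^ 2 / (1 - s) ^ 4 - 2 / s ^ 3

theorem Complex.sq_eq_two_iff {z : ℂ} :
    z ^ 2 = 2 ↔ z = -(Real.sqrt 2 : ℂ) ∨ z = (Real.sqrt 2 : ℂ) := by
  have h : ((Real.sqrt 2 : ℝ) : ℂ) ^ 2 = 2 := by
    norm_cast
    exact Real.sq_sqrt zero_le_two
  rw [← h, sq_eq_sq_iff_eq_or_eq_neg, or_comm]

section SaddleQuadratic

variable {zp zm s : ℂ}

theorem Fd1_eq (zp zm : ℂ) (h0 : s ≠ 0) (h1 : s ≠ 1) (h2 : s ≠ -1) :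
    Fd1 zp zm s = (s ^ 2 * (zp ^ 2 - 2) * (zm ^ 2 - 2) - (s ^ 2 - zp * zm * s + 1) ^ 2) /
      (s * (1 + s) ^ 2 * (1 - s) ^ 2) := by
  have h1' : 1 - s ≠ 0 := sub_ne_zero.mpr h1.symm
  have h2' : 1 + s ≠ 0 := fun h => h2 (by linear_combination h)
  rw [Fd1]
  field_simp
  ring

theorem Fd1_eq_zero_iff (hp : zp ^ 2 = 2) (h0 : s ≠ 0) (h1 : s ≠ 1) (h2 : s ≠ -1) :
    Fd1 zp zm s = 0 ↔ s ^ 2 - zp * zm * s + 1 = 0 := by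
  have h1' : 1 - s ≠ 0 := sub_ne_zero.mpr h1.symm
  have h2' : 1 + s ≠ 0 := fun h => h2 (by linear_combination h)
  rw [Fd1_eq zp zm h0 h1 h2, hp, sub_self, mul_zero, zero_mul, zero_sub, neg_div,
    neg_eq_zero, div_eq_zero_iff, or_iff_left (by positivity), sq_eq_zero_iff]

theorem Fd2_eq_zero (hp : zp ^ 2 = 2) (hg : s ^ 2 - zp * zm * s + 1 = 0)
    (h0 : s ≠ 0) (h1 : s ≠ 1) (h2 : s ≠ -1) : Fd2 zp zm s = 0 := by
  have h1' : 1 - s ≠ 0 := sub_ne_zero.mpr h1.symm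
  have h2' : 1 + s ≠ 0 := fun h => h2 (by linear_combination h)
  rw [Fd2]
  field_simp
  linear_combination (-2 * s ^ 2 - 6 * s ^ 4 + zm ^ 2 * s ^ 2 + 3 * zm ^ 2 * s ^ 4) * hp +
    (1 - 8 * s ^ 2 - s ^ 4 + zp * zm * s + 3 * zp * zm * s ^ 3) * hg

/- With `g(s) = s² - z₊ z₋ s + 1` and `z₊² = 2`, `F' = -g² / (s (1 - s²)²)`, so at a root of `g`
`F''' = -2 g'² / (s (1 - s²)²)`, and there `g'² = (2 s - z₊ z₋)² = 2 (z₋² - 2)`. -/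
theorem Fd3_eq (hp : zp ^ 2 = 2) (hg : s ^ 2 - zp * zm * s + 1 = 0)
    (h0 : s ≠ 0) (h1 : s ≠ 1) (h2 : s ≠ -1) :
    Fd3 zp zm s = -4 * (zm ^ 2 - 2) / (s * (1 + s) ^ 2 * (1 - s) ^ 2) := by
  have h1' : 1 - s ≠ 0 := sub_ne_zero.mpr h1.symm
  have h2' : 1 + s ≠ 0 := fun h => h2 (by linear_combination h)
  rw [Fd3]
  field_simp
  linear_combination
    (-24 * s ^ 4 * (1 + s ^ 2) - (2 - 16 * s ^ 2 - 10 * s ^ 4) * zm ^ 2 * s ^ 2) * hp +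
    (-(2 - 16 * s ^ 2 - 10 * s ^ 4) * (zp * zm * s + s ^ 2 + 1) -
      12 * s ^ 2 * (1 + 6 * s ^ 2 + s ^ 4)) * hg

theorem ne_zero_and_ne_one_and_ne_neg_one_of_quadratic (hp : zp ^ 2 = 2) (hm : zm ^ 2 ≠ 2)
    (hg : s ^ 2 - zp * zm * s + 1 = 0) : s ≠ 0 ∧ s ≠ 1 ∧ s ≠ -1 := by
  refine ⟨?_, ?_, ?_⟩ <;> rintro rfl
  · norm_num at hg
  · exact hm (by linear_combination (-(1 : ℂ) / 2) * zm ^ 2 * hp - (zp * zm + 2) / 2 * hg)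
  · exact hm (by linear_combination (-(1 : ℂ) / 2) * zm ^ 2 * hp + (zp * zm - 2) / 2 * hg)

theorem quadratic_eq_zero_iff_of_sq_eq_two {sm : ℂ} (hp : zp ^ 2 = 2)
    (hsm : sm ^ 2 = zm ^ 2 - 2) :
    s ^ 2 - zp * zm * s + 1 = 0 ↔ s = zp * (zm + sm) / 2 ∨ s = zp * (zm - sm) / 2 := by
  have hfac : s ^ 2 - zp * zm * s + 1 = (s - zp * (zm + sm) / 2) * (s - zp * (zm - sm) / 2) := by
    linear_combination (zp ^ 2 / 4) * hsm - (1 / 2 : ℂ) * hp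
  rw [hfac, mul_eq_zero, sub_eq_zero, sub_eq_zero]

theorem setOf_Fd1_eq_zero_of_sq_eq_two {sm : ℂ} (hp : zp ^ 2 = 2) (hm : zm ^ 2 ≠ 2)
    (hsm : sm ^ 2 = zm ^ 2 - 2) :
    {s : ℂ | s ≠ 0 ∧ s ≠ 1 ∧ s ≠ -1 ∧ Fd1 zp zm s = 0} =
      {zp * (zm + sm) / 2, zp * (zm - sm) / 2} := by
  ext s
  rw [Set.mem_ofPred_eq, Set.mem_insert_iff, Set.mem_singleton_iff,
    ← quadratic_eq_zero_iff_of_sq_eq_two hp hsm]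
  constructor
  · rintro ⟨h0, h1, h2, hF⟩
    exact (Fd1_eq_zero_iff hp h0 h1 h2).mp hF
  · intro hg
    obtain ⟨h0, h1, h2⟩ := ne_zero_and_ne_one_and_ne_neg_one_of_quadratic hp hm hg
    exact ⟨h0, h1, h2, (Fd1_eq_zero_iff hp h0 h1 h2).mpr hg⟩

theorem Fd1_eq_zero_and_Fd2_eq_zero_and_Fd3_ne_zero (hp : zp ^ 2 = 2) (hm : zm ^ 2 ≠ 2)
    (hg : s ^ 2 - zp * zm * s + 1 = 0) :
    Fd1 zp zm s = 0 ∧ Fd2 zp zm s = 0 ∧ Fd3 zp zm s ≠ 0 := by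
  obtain ⟨h0, h1, h2⟩ := ne_zero_and_ne_one_and_ne_neg_one_of_quadratic hp hm hg
  have h1' : 1 - s ≠ 0 := sub_ne_zero.mpr h1.symm
  have h2' : 1 + s ≠ 0 := fun h => h2 (by linear_combination h)
  refine ⟨(Fd1_eq_zero_iff hp h0 h1 h2).mpr hg, Fd2_eq_zero hp hg h0 h1 h2, ?_⟩
  rw [Fd3_eq hp hg h0 h1 h2]
  exact div_ne_zero (mul_ne_zero (by norm_num) (sub_ne_zero.mpr hm)) (by positivity)

end SaddleQuadratic

section Degenerate

noncomputable def degenerateFd1 (c s : ℂ) : ℂ :=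
  4 * c / (s + c) ^ 2 - 1 / s

theorem differentiableOn_degenerateFd1 (c : ℂ) :
    DifferentiableOn ℂ (degenerateFd1 c) {s | s ≠ 0 ∧ s ≠ -c} := by
  refine .sub (.div (differentiableOn_const _) (by fun_prop) fun s hs => pow_ne_zero 2 ?_)
    (.div (differentiableOn_const _) differentiableOn_id fun s hs => hs.1)
  exact fun h => hs.2 (by linear_combination h)

theorem setOf_degenerateFd1_eq_zero {c : ℂ} (hc : c ≠ 0) :
    {s : ℂ | s ≠ 0 ∧ s ≠ -c ∧ degenerateFd1 c s = 0} = {c} := by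
  ext s
  rw [Set.mem_ofPred_eq, Set.mem_singleton_iff, degenerateFd1]
  constructor
  · rintro ⟨h0, h1, hF⟩
    have h1' : s + c ≠ 0 := fun h => h1 (by linear_combination h)
    field_simp at hF
    have hsq : (s - c) ^ 2 = 0 := by linear_combination -hF
    exact sub_eq_zero.mp (pow_eq_zero_iff two_ne_zero |>.mp hsq)
  · rintro rfl
    have h2 : s + s ≠ 0 := by rw [← two_mul]; exact mul_ne_zero two_ne_zero hc
    refine ⟨hc, fun h => h2 (by linear_combination h), ?_⟩
    field_simp
    ring

variable {zm : ℂ} {ε : ℂ}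

/- An equality of functions, valid also at `s = ε`: there the vanishing term of `Fd1` is `0 / 0`,
which is `0` in Lean. -/
theorem Fd1_mul_left (hε : ε = 1 ∨ ε = -1) (hm : zm ^ 2 = 2) :
    Fd1 (ε * zm) zm = degenerateFd1 ε := by
  funext s
  rcases hε with rfl | rfl
  · have h8 : (1 * zm + zm) ^ 2 = 2 * 4 := by linear_combination 4 * hm
    rw [Fd1, degenerateFd1, h8, mul_div_mul_left _ _ two_ne_zero]
    ring
  · have h8 : (-1 * zm - zm) ^ 2 = 2 * 4 := by linear_combination 4 * hm
    rw [Fd1, degenerateFd1, h8, mul_div_mul_left _ _ two_ne_zero]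
    ring

theorem Fd2_mul_left_self (hε : ε = 1 ∨ ε = -1) (hm : zm ^ 2 = 2) :
    Fd2 (ε * zm) zm ε = 0 := by
  rcases hε with rfl | rfl <;>
  · rw [Fd2]
    ring_nf
    rw [hm]
    norm_num

theorem Fd3_mul_left_self (hε : ε = 1 ∨ ε = -1) (hm : zm ^ 2 = 2) :
    Fd3 (ε * zm) zm ε = -ε / 2 := by
  rcases hε with rfl | rfl <;>
  · rw [Fd3]
    ring_nf
    rw [hm]
    norm_num

end Degenerate

theorem stmt_5_general :
    -- (iii)
    (∀ zp zm sm : ℂ, (zp = -(Real.sqrt 2 : ℂ) ∨ zp = (Real.sqrt 2 : ℂ)) →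
      (zm ≠ -(Real.sqrt 2 : ℂ) ∧ zm ≠ (Real.sqrt 2 : ℂ)) → sm ^ 2 = zm ^ 2 - 2 →
        ({s : ℂ | s ≠ 0 ∧ s ≠ 1 ∧ s ≠ -1 ∧ Fd1 zp zm s = 0} =
            {zp * (zm + sm) / 2, zp * (zm - sm) / 2} ∧
          ∀ p ∈ ({zp * (zm + sm) / 2, zp * (zm - sm) / 2} : Set ℂ),
            Fd1 zp zm p = 0 ∧ Fd2 zp zm p = 0 ∧ Fd3 zp zm p ≠ 0)) ∧
    -- (iv)
    (∀ zp zm : ℂ, ∀ ε : ℂ, (ε = 1 ∨ ε = -1) → zp = ε * zm →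
      (zp = -(Real.sqrt 2 : ℂ) ∨ zp = (Real.sqrt 2 : ℂ)) →
      (zm = -(Real.sqrt 2 : ℂ) ∨ zm = (Real.sqrt 2 : ℂ)) →
        ((zp + zm) ^ 2 = 0 ∨ (zp - zm) ^ 2 = 0) ∧
        (zp * zm / 2 = 1 ∨ zp * zm / 2 = -1) ∧
        DifferentiableOn ℂ (Fd1 zp zm) {s : ℂ | s ≠ 0 ∧ s ≠ -(zp * zm / 2)} ∧
        {s : ℂ | s ≠ 0 ∧ s ≠ -(zp * zm / 2) ∧ Fd1 zp zm s = 0} = {zp * zm / 2} ∧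
        Fd2 zp zm (zp * zm / 2) = 0 ∧ Fd3 zp zm (zp * zm / 2) ≠ 0) := by
  refine ⟨fun zp zm sm hzp hzm hsm => ?_, fun zp zm ε hε hzp _ hzm => ?_⟩
  · have hp : zp ^ 2 = 2 := Complex.sq_eq_two_iff.mpr hzp
    have hm : zm ^ 2 ≠ 2 := fun h => (Complex.sq_eq_two_iff.mp h).elim hzm.1 hzm.2
    exact ⟨setOf_Fd1_eq_zero_of_sq_eq_two hp hm hsm, fun p hroot =>
      Fd1_eq_zero_and_Fd2_eq_zero_and_Fd3_ne_zero hp hm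
        ((quadratic_eq_zero_iff_of_sq_eq_two hp hsm).mpr hroot)⟩
  · subst hzp
    have hm : zm ^ 2 = 2 := Complex.sq_eq_two_iff.mpr hzm
    have hε0 : ε ≠ 0 := by rcases hε with rfl | rfl <;> norm_num
    rw [show ε * zm * zm / 2 = ε by linear_combination ε / 2 * hm, Fd1_mul_left hε hm,
      Fd3_mul_left_self hε hm]
    refine ⟨?_, hε, differentiableOn_degenerateFd1 ε, setOf_degenerateFd1_eq_zero hε0,
      Fd2_mul_left_self hε hm, div_ne_zero (neg_ne_zero.mpr hε0) two_ne_zero⟩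
    rcases hε with rfl | rfl
    · exact Or.inr (by ring)
    · exact Or.inl (by ring)

/-- Saddle points of the phase function, degenerate cases (iii) and (iv). -/
theorem stmt_5 (τ : ℝ) (hτ0 : 0 < τ) (hτ1 : τ < 1) :
    -- (iii)
    (∀ zp zm sm : ℂ, (zp = -(Real.sqrt 2 : ℂ) ∨ zp = (Real.sqrt 2 : ℂ)) →
      (zm ≠ -(Real.sqrt 2 : ℂ) ∧ zm ≠ (Real.sqrt 2 : ℂ)) → sm ^ 2 = zm ^ 2 - 2 →
        ({s : ℂ | s ≠ 0 ∧ s ≠ 1 ∧ s ≠ -1 ∧ Fd1 zp zm s = 0} =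
            {zp * (zm + sm) / 2, zp * (zm - sm) / 2} ∧
          ∀ p ∈ ({zp * (zm + sm) / 2, zp * (zm - sm) / 2} : Set ℂ),
            Fd1 zp zm p = 0 ∧ Fd2 zp zm p = 0 ∧ Fd3 zp zm p ≠ 0)) ∧
    -- (iv)
    (∀ zp zm : ℂ, ∀ ε : ℂ, (ε = 1 ∨ ε = -1) → zp = ε * zm →
      (zp = -(Real.sqrt 2 : ℂ) ∨ zp = (Real.sqrt 2 : ℂ)) →
      (zm = -(Real.sqrt 2 : ℂ) ∨ zm = (Real.sqrt 2 : ℂ)) →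
        ((zp + zm) ^ 2 = 0 ∨ (zp - zm) ^ 2 = 0) ∧
        (zp * zm / 2 = 1 ∨ zp * zm / 2 = -1) ∧
        DifferentiableOn ℂ (Fd1 zp zm) {s : ℂ | s ≠ 0 ∧ s ≠ -(zp * zm / 2)} ∧
        {s : ℂ | s ≠ 0 ∧ s ≠ -(zp * zm / 2) ∧ Fd1 zp zm s = 0} = {zp * zm / 2} ∧
        Fd2 zp zm (zp * zm / 2) = 0 ∧ Fd3 zp zm (zp * zm / 2) ≠ 0) :=
  stmt_5_general
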